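/- Let Π be a 2×2 row-stochastic matrix and μ ∈ (0,1)² with μ₁ > μ₂. Let μ' = Π·μ, and suppose μ'₁ > μ'₂ (after possibly permuting, without loss of generality). Then f(μ'₁, μ'₂) ≥ f(μ₁, μ₂), where f(a,b) = (a−b)/D(b‖a) and D is the binary KL divergence. Consequently, the problem-dependent Thompson sampling regret bound coefficient for the noncompliant 2-armed Bernoulli bandit with effective means μ' is at least that for the compliant bandit with means μ. -/

import Mathlib

/-!
Both partial maps of the binary KL divergence, `y ↦ D(y‖a)` and `x ↦ D(b‖x)`, are convex on
`(0,1)` and vanish on the diagonal, so `D(b‖a)/(a - b)` is a secant slope of a convex function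
through a zero in either variable. Monotonicity of secant slopes makes it nonincreasing in `b`
and nondecreasing in `a`, and `f` is its reciprocal. A row-stochastic `Π` moves `μ₁, μ₂` inwards
(`μ₂ ≤ μ'₂ < μ'₁ ≤ μ₁`), which can only increase `f`.
-/

noncomputable def binKL (a b : ℝ) : ℝ :=
  a * Real.log (a / b) + (1 - a) * Real.log ((1 - a) / (1 - b))

/-- f(a,b) = (a−b)/D(b‖a), with the convention f(x,x) = 0. -/
noncomputable def f (a b : ℝ) : ℝ := if a = b then 0 else (a - b) / binKL b a

open Real Set InformationTheory

lemma ConvexOn.comp_one_sub {s : Set ℝ} {φ : ℝ → ℝ} (hφ : ConvexOn ℝ s φ) :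
    ConvexOn ℝ ((1 - ·) ⁻¹' s) (fun y => φ (1 - y)) := by
  have h : ⇑(AffineMap.lineMap (1 : ℝ) 0) = (1 - ·) := by
    ext y; simp [AffineMap.lineMap_apply_ring']; ring
  have := hφ.comp_affineMap (AffineMap.lineMap (1 : ℝ) 0)
  rw [h] at this
  exact this

lemma binKL_self (a : ℝ) : binKL a a = 0 := by
  simp [binKL]

lemma binKL_eq_klFun {a b : ℝ} (ha₀ : a ≠ 0) (ha₁ : a ≠ 1) :
    binKL b a = a * klFun (b / a) + (1 - a) * klFun ((1 - b) / (1 - a)) := by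
  have : 1 - a ≠ 0 := sub_ne_zero.2 ha₁.symm
  simp only [binKL, klFun_apply]
  field_simp
  ring

lemma binKL_pos {a b : ℝ} (hb : b ∈ Icc 0 1) (ha : a ∈ Ioo 0 1) (hba : b ≠ a) :
    0 < binKL b a := by
  obtain ⟨ha₀, ha₁⟩ := ha
  have h1a : 0 < 1 - a := by linarith
  have h1b : 0 ≤ 1 - b := by linarith [hb.2]
  have hb₀ := hb.1
  rw [binKL_eq_klFun ha₀.ne' ha₁.ne]
  have hpos : 0 < klFun (b / a) :=
    (klFun_nonneg (by positivity)).lt_of_ne' fun h =>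
      hba ((div_eq_one_iff_eq ha₀.ne').1 ((klFun_eq_zero_iff (by positivity)).1 h))
  have := klFun_nonneg (x := (1 - b) / (1 - a)) (by positivity)
  positivity

lemma convexOn_binKL_left {a : ℝ} (ha₀ : a ≠ 0) (ha₁ : a ≠ 1) :
    ConvexOn ℝ (Ioo 0 1) (binKL · a) := by
  have hmul := convexOn_mul_log.subset (Ioo_subset_Ioi_self.trans Ioi_subset_Ici_self)
    (convex_Ioo 0 1)
  have hmul' := convexOn_mul_log.comp_one_sub.subset
    (fun y hy => show (0:ℝ) ≤ 1 - y by linarith [hy.2]) (convex_Ioo 0 1)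
  have hlin := LinearMap.convexOn (LinearMap.mulLeft ℝ (log (1 - a) - log a)) (convex_Ioo (0:ℝ) 1)
  refine ((hmul.add hmul').add hlin).add_const (-log (1 - a)) |>.congr fun y hy => ?_
  have : 1 - a ≠ 0 := sub_ne_zero.2 ha₁.symm
  have : 1 - y ≠ 0 := by linarith [hy.2]
  simp only [binKL, Pi.add_apply, LinearMap.mulLeft_apply]
  rw [log_div hy.1.ne' ha₀, log_div ‹1 - y ≠ 0› ‹1 - a ≠ 0›]
  ring

lemma convexOn_binKL_right {b : ℝ} (hb : b ∈ Ioo 0 1) :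
    ConvexOn ℝ (Ioo 0 1) (binKL b ·) := by
  have hnlog : ConvexOn ℝ (Ioi 0) (fun x => -log x) := strictConcaveOn_log_Ioi.concaveOn.neg
  have h1 := (hnlog.subset Ioo_subset_Ioi_self (convex_Ioo 0 1)).smul hb.1.le
  have h2 := (hnlog.comp_one_sub.subset
    (fun y hy => show (0:ℝ) < 1 - y by linarith [hy.2]) (convex_Ioo 0 1)).smul
    (sub_nonneg.2 hb.2.le)
  refine (h1.add h2).add_const (b * log b + (1 - b) * log (1 - b)) |>.congr fun x hx => ?_
  have : 1 - b ≠ 0 := by linarith [hb.2]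
  have : 1 - x ≠ 0 := by linarith [hx.2]
  simp only [binKL, Pi.add_apply, smul_eq_mul]
  rw [log_div hb.1.ne' hx.1.ne', log_div ‹1 - b ≠ 0› ‹1 - x ≠ 0›]
  ring

lemma binKL_div_sub_le_of_le_left {a b b' : ℝ} (hb₀ : 0 < b) (hbb' : b ≤ b') (hb'a : b' < a)
    (ha₁ : a < 1) : binKL b' a / (a - b') ≤ binKL b a / (a - b) := by
  have hslope := (convexOn_binKL_left (hb₀.trans (hbb'.trans_lt hb'a)).ne' ha₁.ne).secant_mono
    (show a ∈ Ioo 0 1 by constructor <;> linarith) (show b ∈ Ioo 0 1 by constructor <;> linarith)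
    (show b' ∈ Ioo 0 1 by constructor <;> linarith) (by linarith) hb'a.ne hbb'
  rw [binKL_self, sub_zero, sub_zero, ← neg_sub a b, ← neg_sub a b', div_neg, div_neg] at hslope
  exact neg_le_neg_iff.1 hslope

lemma binKL_div_sub_le_of_le_right {a a' b : ℝ} (hb₀ : 0 < b) (hba' : b < a') (ha'a : a' ≤ a)
    (ha₁ : a < 1) : binKL b a' / (a' - b) ≤ binKL b a / (a - b) := by
  have hslope := (convexOn_binKL_right (show b ∈ Ioo 0 1 by constructor <;> linarith)).secant_mono
    (show b ∈ Ioo 0 1 by constructor <;> linarith) (show a' ∈ Ioo 0 1 by constructor <;> linarith)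
    (show a ∈ Ioo 0 1 by constructor <;> linarith) hba'.ne' (by linarith) ha'a
  simpa only [binKL_self, sub_zero] using hslope

lemma f_eq_inv_div {a b : ℝ} (hba : b < a) : f a b = (binKL b a / (a - b))⁻¹ := by
  rw [f, if_neg hba.ne', inv_div]

lemma f_le_f_of_le_of_le {a a' b b' : ℝ} (hb₀ : 0 < b) (hbb' : b ≤ b') (hb'a' : b' < a')
    (ha'a : a' ≤ a) (ha₁ : a < 1) : f a b ≤ f a' b' := by
  rw [f_eq_inv_div (hbb'.trans_lt (hb'a'.trans_le ha'a)), f_eq_inv_div hb'a']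
  refine inv_anti₀ (div_pos (binKL_pos ?_ ?_ hb'a'.ne) (sub_pos.2 hb'a')) ?_
  · constructor <;> linarith
  · constructor <;> linarith
  calc binKL b' a' / (a' - b') ≤ binKL b a' / (a' - b) :=
        binKL_div_sub_le_of_le_left hb₀ hbb' hb'a' (ha'a.trans_lt ha₁)
    _ ≤ binKL b a / (a - b) := binKL_div_sub_le_of_le_right hb₀ (hbb'.trans_lt hb'a') ha'a ha₁

namespace Matrix

variable {R n : Type*} [Fintype n] [DecidableEq n] [Semiring R] [PartialOrder R]
  [IsOrderedRing R] {M : Matrix n n R} {x : n → R} {c : R}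

lemma mulVec_le_of_mem_rowStochastic (hM : M ∈ rowStochastic R n) (hx : ∀ j, x j ≤ c) (i : n) :
    (M *ᵥ x) i ≤ c :=
  calc (M *ᵥ x) i = ∑ j, M i j * x j := rfl
    _ ≤ ∑ j, M i j * c := Finset.sum_le_sum fun j _ =>
        mul_le_mul_of_nonneg_left (hx j) (nonneg_of_mem_rowStochastic hM)
    _ = c := by rw [← Finset.sum_mul, sum_row_of_mem_rowStochastic hM, one_mul]

lemma le_mulVec_of_mem_rowStochastic (hM : M ∈ rowStochastic R n) (hx : ∀ j, c ≤ x j) (i : n) :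
    c ≤ (M *ᵥ x) i :=
  calc c = ∑ j, M i j * c := by rw [← Finset.sum_mul, sum_row_of_mem_rowStochastic hM, one_mul]
    _ ≤ ∑ j, M i j * x j := Finset.sum_le_sum fun j _ =>
        mul_le_mul_of_nonneg_left (hx j) (nonneg_of_mem_rowStochastic hM)
    _ = (M *ᵥ x) i := rfl

end Matrix

/-- Theorem 1 (core step): noncompliance increases the regret-bound coefficient
for a 2-armed Bernoulli bandit. -/
theorem noncompliance_increases_coeff (P : Matrix (Fin 2) (Fin 2) ℝ)
    (μ : Fin 2 → ℝ)
    (hP0 : ∀ i j, 0 ≤ P i j) (hP1 : ∀ i, P i 0 + P i 1 = 1)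
    (h0 : μ 0 ∈ Set.Ioo (0:ℝ) 1) (h1 : μ 1 ∈ Set.Ioo (0:ℝ) 1)
    (hμ : μ 1 < μ 0)
    (hμ' : P.mulVec μ 1 < P.mulVec μ 0) :
    f (μ 0) (μ 1) ≤ f (P.mulVec μ 0) (P.mulVec μ 1) := by
  have hP : P ∈ Matrix.rowStochastic ℝ (Fin 2) :=
    Matrix.mem_rowStochastic_iff_sum.2 ⟨hP0, by simpa only [Fin.sum_univ_two] using hP1⟩
  have hle : ∀ j, μ j ≤ μ 0 := Fin.forall_fin_two.2 ⟨le_rfl, hμ.le⟩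
  have hge : ∀ j, μ 1 ≤ μ j := Fin.forall_fin_two.2 ⟨hμ.le, le_rfl⟩
  exact f_le_f_of_le_of_le h1.1 (Matrix.le_mulVec_of_mem_rowStochastic hP hge 1) hμ'
    (Matrix.mulVec_le_of_mem_rowStochastic hP hle 0) h0.2
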